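/- Let 𝒜 be a unital associative ℂ-algebra and C(𝒜) = ⊕_n (⊗^n 𝒜)* the tensor algebra of multilinear forms. For q ∈ ℂ∖{0,1}, define m*_q(ω)(x_0,…,x_n) = ∑_{k=1}^n q^{k−1} ω(x_0,…,x_{k−1}x_k,…,x_n) for ω ∈ C^n(𝒜), n ≥ 1, and m*_q = 0 on C^0(𝒜) = ℂ. If q is a primitive N-th root of unity (N ≥ 2), then (m*_q)^N = 0; this follows from the associativity of the product of 𝒜. -/

import Mathlib

/-- A multilinear `n`-form on `𝒜` (an element of `(⊗^n 𝒜)*`), encoded as a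
function of infinite tuples depending only on the coordinates
`x 0, …, x (n-1)` and linear in each of them. -/
def IsMForm {A : Type*} [Ring A] [Algebra ℂ A] (n : ℕ) (ω : (ℕ → A) → ℂ) : Prop :=
  (∀ x y : ℕ → A, (∀ i < n, x i = y i) → ω x = ω y) ∧
  (∀ i < n, ∀ (x : ℕ → A) (c : ℂ) (u v : A),
    ω (Function.update x i (c • u + v))
      = c * ω (Function.update x i u) + ω (Function.update x i v))

/-- The dual of the product, `m*_q`, on `n`-forms:
`m*_q(ω)(x_0,…,x_n) = ∑_{k=1}^n q^(k-1) ω(x_0,…,x_{k-1}x_k,…,x_n)` for `n ≥ 1`,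
and `m*_q = 0` on `C^0(𝒜) = ℂ`. -/
noncomputable def mStar {A : Type*} [Ring A] [Algebra ℂ A] (q : ℂ) (n : ℕ)
    (ω : (ℕ → A) → ℂ) : (ℕ → A) → ℂ :=
  fun x => ∑ k ∈ Finset.Icc 1 n, q ^ (k - 1) *
    ω (fun i => if i < k - 1 then x i
                else if i = k - 1 then x (k - 1) * x k else x (i + 1))

/-- Iterates of `m*_q`, starting from degree `n`. -/
noncomputable def mStarIter {A : Type*} [Ring A] [Algebra ℂ A] (q : ℂ) :
    ℕ → ℕ → ((ℕ → A) → ℂ) → ((ℕ → A) → ℂ)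
  | 0, _, ω => ω
  | m + 1, n, ω => mStar q (n + m) (mStarIter q m n ω)



namespace MStarAux


open Finset

variable {A : Type*} [Ring A] [Algebra ℂ A]

/-- left-associated product `x s * x (s+1) * ⋯ * x (s+m)` -/
def blk (x : ℕ → A) (s : ℕ) : ℕ → A
  | 0 => x s
  | m + 1 => blk x s m * x (s + (m + 1))

lemma blk_congr {x y : ℕ → A} {s : ℕ} : ∀ {m : ℕ}, (∀ t ≤ m, x (s + t) = y (s + t)) →
    blk x s m = blk y s m
  | 0, h => by simpa [blk] using h 0 le_rfl
  | m + 1, h => by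
    rw [blk, blk, blk_congr (fun t ht => h t (ht.trans (Nat.le_succ m))), h (m + 1) le_rfl]

lemma blk_shift (x : ℕ → A) (s m : ℕ) : blk (fun i => x (i + 1)) s m = blk x (s + 1) m := by
  induction m with
  | zero => simp [blk]
  | succ m ih => rw [blk, blk, ih, show s + (m + 1) + 1 = s + 1 + (m + 1) by omega]

/-- merge the pair `(r, r+1)` of a tuple -/
def mu (r : ℕ) (x : ℕ → A) : ℕ → A :=
  fun i => if i < r then x i else if i = r then x r * x (r + 1) else x (i + 1)

lemma blk_mu_lt {r : ℕ} (x : ℕ → A) {s m : ℕ} (h : s + m < r) :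
    blk (mu r x) s m = blk x s m :=
  blk_congr fun t ht => by
    have h1 : s + t < r := by omega
    simp [mu, h1]

lemma blk_mu_gt {r : ℕ} (x : ℕ → A) {s m : ℕ} (h : r < s) :
    blk (mu r x) s m = blk x (s + 1) m := by
  rw [← blk_shift]
  exact blk_congr fun t ht => by
    have h1 : ¬ s + t < r := by omega
    have h2 : ¬ s + t = r := by omega
    simp [mu, h1, h2]

lemma blk_mu_mem (x : ℕ → A) : ∀ (m t s : ℕ), t ≤ m → blk (mu (s + t) x) s m = blk x s (m + 1) := by
  intro m
  induction m with
  | zero =>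
    intro t s ht
    interval_cases t
    simp [blk, mu]
  | succ m ih =>
    intro t s ht
    rcases Nat.lt_or_ge t (m + 1) with h | h
    · have h1 : ¬ s + (m + 1) < s + t := by omega
      have h2 : ¬ s + (m + 1) = s + t := by omega
      have e1 : blk (mu (s + t) x) s (m + 1) = blk x s (m + 1) * x (s + (m + 1) + 1) := by
        rw [blk, ih t s (by omega)]
        congr 1
        simp [mu, h1, h2]
        intro h3; omega
      rw [e1, show s + (m + 1) + 1 = s + (m + 1 + 1) by omega,
        show blk x s (m + 1 + 1) = blk x s (m + 1) * x (s + (m + 1 + 1)) from rfl]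
    · have ht' : t = m + 1 := by omega
      subst ht'
      rw [blk, blk_mu_lt x (by omega)]
      have : mu (s + (m + 1)) x (s + (m + 1)) = x (s + (m + 1)) * x (s + (m + 1) + 1) := by
        simp [mu]
      rw [this, blk, blk, ← mul_assoc, show s + (m + 1 + 1) = s + (m + 1) + 1 by omega]


/-! ### geometric sums -/

noncomputable def geom (q : ℂ) (m : ℕ) : ℂ := ∑ t ∈ Finset.range m, q ^ t

noncomputable def qfac (q : ℂ) : ℕ → ℂ
  | 0 => 1
  | N + 1 => qfac q N * geom q (N + 1)

lemma geom_add (q : ℂ) (a b : ℕ) : geom q (a + b) = geom q a + q ^ a * geom q b := by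
  unfold geom
  rw [Finset.sum_range_add, Finset.mul_sum]
  congr 1
  exact Finset.sum_congr rfl fun t _ => by rw [pow_add]

lemma telescope (q : ℂ) (c : ℕ → ℕ) :
    ∀ n, ∑ j ∈ range n, q ^ (∑ t ∈ range j, c t) * geom q (c j)
      = geom q (∑ t ∈ range n, c t) := by
  intro n
  induction n with
  | zero => simp [geom]
  | succ n ih => rw [Finset.sum_range_succ, ih, Finset.sum_range_succ, geom_add]

/-! ### compositions -/

def pad (n : ℕ) (b : Fin n → ℕ) (i : ℕ) : ℕ := if h : i < n then b ⟨i, h⟩ else 0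

def SS (n : ℕ) (b : Fin n → ℕ) (j : ℕ) : ℕ := ∑ t ∈ Finset.range j, pad n b t

def st (n : ℕ) (b : Fin n → ℕ) (j : ℕ) : ℕ := j + SS n b j

def Φ (n : ℕ) (b : Fin n → ℕ) (x : ℕ → A) (i : ℕ) : A := blk x (st n b i) (pad n b i)

def Ecoef (n : ℕ) (b : Fin n → ℕ) : ℕ := ∑ t ∈ Finset.range n, t * pad n b t

def bump {n : ℕ} (b : Fin n → ℕ) (j : Fin n) : Fin n → ℕ := Function.update b j (b j + 1)

def drp {n : ℕ} (b : Fin n → ℕ) (j : Fin n) : Fin n → ℕ := Function.update b j (b j - 1)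

lemma pad_val {n : ℕ} (b : Fin n → ℕ) (j : Fin n) : pad n b j.val = b j := by
  simp [pad, j.isLt]

lemma sum_pad (n : ℕ) (b : Fin n → ℕ) : ∑ t ∈ range n, pad n b t = ∑ i, b i := by
  rw [← Fin.sum_univ_eq_sum_range]
  exact Finset.sum_congr rfl fun i _ => pad_val b i

lemma pad_bump {n : ℕ} (b : Fin n → ℕ) (j : Fin n) (t : ℕ) :
    pad n (bump b j) t = pad n b t + (if t = j.val then 1 else 0) := by
  unfold pad bump
  by_cases h : t < n
  · rw [dif_pos h, dif_pos h, Function.update_apply]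
    by_cases h2 : t = j.val
    · have : (⟨t, h⟩ : Fin n) = j := Fin.ext h2
      simp [this, h2]
    · have : (⟨t, h⟩ : Fin n) ≠ j := fun hc => h2 (by rw [← hc])
      simp [this, h2]
  · have h2 : t ≠ j.val := fun hc => h (hc ▸ j.isLt)
    simp [h, h2]

lemma SS_bump {n : ℕ} (b : Fin n → ℕ) (j : Fin n) (i : ℕ) :
    SS n (bump b j) i = SS n b i + (if j.val < i then 1 else 0) := by
  unfold SS
  simp_rw [pad_bump, Finset.sum_add_distrib, Finset.sum_ite_eq' (Finset.range i), mem_range]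

lemma Ecoef_bump {n : ℕ} (b : Fin n → ℕ) (j : Fin n) :
    Ecoef n (bump b j) = Ecoef n b + j.val := by
  unfold Ecoef
  simp_rw [pad_bump, Nat.mul_add, Finset.sum_add_distrib, mul_ite, mul_one, mul_zero,
    Finset.sum_ite_eq' (Finset.range n), mem_range]
  simp [j.isLt]

lemma st_succ (n : ℕ) (b : Fin n → ℕ) (j : ℕ) :
    st n b (j + 1) = st n b j + pad n b j + 1 := by
  unfold st SS
  rw [Finset.sum_range_succ]
  omega

lemma st_strictMono (n : ℕ) (b : Fin n → ℕ) : StrictMono (st n b) :=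
  strictMono_nat_of_lt_succ fun j => by rw [st_succ]; omega

lemma sum_bump {n : ℕ} (b : Fin n → ℕ) (j : Fin n) : ∑ i, bump b j i = (∑ i, b i) + 1 := by
  unfold bump
  rw [Finset.sum_update_of_mem (Finset.mem_univ j),
    ← Finset.add_sum_erase _ b (Finset.mem_univ j), Finset.erase_eq]
  omega

lemma sum_drp {n : ℕ} (b : Fin n → ℕ) (j : Fin n) (hj : b j ≠ 0) :
    (∑ i, drp b j i) + 1 = ∑ i, b i := by
  unfold drp
  rw [Finset.sum_update_of_mem (Finset.mem_univ j),
    ← Finset.add_sum_erase _ b (Finset.mem_univ j), Finset.erase_eq]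
  omega

lemma drp_bump {n : ℕ} (b : Fin n → ℕ) (j : Fin n) : drp (bump b j) j = b := by
  funext i
  unfold drp bump
  by_cases h : i = j
  · subst h; simp
  · simp [Function.update_apply, h]

lemma bump_drp {n : ℕ} (b : Fin n → ℕ) (j : Fin n) (hj : b j ≠ 0) : bump (drp b j) j = b := by
  funext i
  unfold drp bump
  by_cases h : i = j
  · subst h; simp; omega
  · simp [Function.update_apply, h]


lemma phi_mu {n : ℕ} (b : Fin n → ℕ) (j : Fin n) (k : ℕ)
    (h1 : st n b j.val ≤ k) (h2 : k ≤ st n b j.val + pad n b j.val) (x : ℕ → A) :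
    ∀ i < n, Φ n b (mu k x) i = Φ n (bump b j) x i := by
  intro i hi
  unfold Φ st
  rcases lt_trichotomy i j.val with hij | hij | hij
  · have hend : st n b i + pad n b i + 1 = st n b (i + 1) := by rw [st_succ]
    have hmono : st n b (i + 1) ≤ st n b j.val := (st_strictMono n b).le_iff_le.mpr (by omega)
    have hlt : i + SS n b i + pad n b i < k := by
      have : st n b i = i + SS n b i := rfl
      omega
    rw [blk_mu_lt x hlt]
    have e1 : pad n (bump b j) i = pad n b i := by
      rw [pad_bump]; simp [show ¬ i = j.val by omega]
    have e2 : SS n (bump b j) i = SS n b i := by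
      rw [SS_bump]; simp [show ¬ j.val < i by omega]
    rw [e1, e2]
  · have e1 : pad n (bump b j) i = pad n b i + 1 := by
      rw [pad_bump]; simp [hij]
    have e2 : SS n (bump b j) i = SS n b i := by
      rw [SS_bump]; simp [show ¬ j.val < i by omega]
    have hs : st n b j.val = i + SS n b i := by rw [← hij]; rfl
    have hp : pad n b j.val = pad n b i := by rw [← hij]
    rw [e1, e2]
    have hk : k = (i + SS n b i) + (k - (i + SS n b i)) := by omega
    rw [hk, blk_mu_mem x (pad n b i) _ _ (by omega)]
  · have hlt : k < st n b i := by
      have h3 : st n b (j.val + 1) ≤ st n b i := (st_strictMono n b).le_iff_le.mpr (by omega)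
      have h4 : st n b (j.val + 1) = st n b j.val + pad n b j.val + 1 := st_succ n b j.val
      omega
    have hlt' : k < i + SS n b i := hlt
    rw [blk_mu_gt x hlt']
    have e1 : pad n (bump b j) i = pad n b i := by
      rw [pad_bump]; simp [show ¬ i = j.val by omega]
    have e2 : SS n (bump b j) i = SS n b i + 1 := by
      rw [SS_bump]; simp [hij]
    rw [e1, e2, show i + (SS n b i + 1) = i + SS n b i + 1 by omega]

lemma range_eq_biUnion (f : ℕ → ℕ) (hf : StrictMono f) (h0 : f 0 = 0) (n : ℕ) :
    Finset.range (f n) = (Finset.range n).biUnion (fun j => Finset.Ico (f j) (f (j + 1))) := by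
  ext k
  simp only [Finset.mem_biUnion, Finset.mem_range, Finset.mem_Ico]
  constructor
  · intro hk
    induction n with
    | zero => omega
    | succ n ih =>
      rcases Nat.lt_or_ge k (f n) with h | h
      · obtain ⟨j, hj1, hj2⟩ := ih h
        exact ⟨j, by omega, hj2⟩
      · exact ⟨n, by omega, h, hk⟩
  · rintro ⟨j, hj, hk1, hk2⟩
    have : f (j + 1) ≤ f n := hf.le_iff_le.mpr (by omega)
    omega

lemma Ico_pairwise {f : ℕ → ℕ} (hf : StrictMono f) (n : ℕ) :
    (↑(Finset.range n) : Set ℕ).PairwiseDisjoint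
      (fun j => Finset.Ico (f j) (f (j + 1))) := by
  intro i _ j _ hij
  simp only [Function.onFun]
  rw [Finset.disjoint_left]
  intro a ha hb
  rw [Finset.mem_Ico] at ha hb
  rcases lt_or_gt_of_ne hij with h | h
  · have : f (i + 1) ≤ f j := hf.le_iff_le.mpr (by omega)
    omega
  · have : f (j + 1) ≤ f i := hf.le_iff_le.mpr (by omega)
    omega

lemma mStar_eq (q : ℂ) (M : ℕ) (ω : (ℕ → A) → ℂ) (x : ℕ → A) :
    mStar q M ω x = ∑ k ∈ Finset.range M, q ^ k * ω (mu k x) := by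
  unfold mStar
  rw [← Finset.Ico_add_one_right_eq_Icc, Finset.sum_Ico_eq_sum_range]
  refine Finset.sum_congr (by norm_num) fun k _ => ?_
  have hk : 1 + k - 1 = k := by omega
  rw [hk, show 1 + k = k + 1 by omega]
  rfl


lemma groupC (q : ℂ) {n N : ℕ} (b : Fin n → ℕ) (hb : ∑ i, b i = N)
    (ω : (ℕ → A) → ℂ) (hω1 : ∀ x y : ℕ → A, (∀ i < n, x i = y i) → ω x = ω y) (x : ℕ → A) :
    ∑ k ∈ Finset.range (n + N), q ^ k * ω (Φ n b (mu k x)) =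
    ∑ j : Fin n, q ^ (st n b j.val) * geom q (b j + 1) * ω (Φ n (bump b j) x) := by
  have h0 : st n b 0 = 0 := by simp [st, SS]
  have hn : st n b n = n + N := by
    unfold st SS; rw [sum_pad, hb]
  rw [show n + N = st n b n from hn.symm,
    range_eq_biUnion (st n b) (st_strictMono n b) h0 n,
    Finset.sum_biUnion (Ico_pairwise (st_strictMono n b) n),
    Finset.sum_range (fun j => ∑ k ∈ Finset.Ico (st n b j) (st n b (j + 1)),
      q ^ k * ω (Φ n b (mu k x)))]
  refine Finset.sum_congr rfl fun j _ => ?_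
  have hst : st n b (j.val + 1) = st n b j.val + pad n b j.val + 1 := st_succ n b j.val
  have hrep : ∀ k ∈ Finset.Ico (st n b j.val) (st n b (j.val + 1)),
      q ^ k * ω (Φ n b (mu k x)) = q ^ k * ω (Φ n (bump b j) x) := by
    intro k hk
    rw [Finset.mem_Ico] at hk
    rw [hω1 _ _ (phi_mu b j k hk.1 (by omega) x)]
  rw [Finset.sum_congr rfl hrep, Finset.sum_Ico_eq_sum_range,
    show st n b (j.val + 1) - st n b j.val = pad n b j.val + 1 by omega]
  rw [← Finset.sum_mul]
  congr 1
  simp_rw [pow_add]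
  rw [← Finset.mul_sum]
  simp [geom, pad_val]


lemma iter_formula (q : ℂ) (n : ℕ) (ω : (ℕ → A) → ℂ)
    (hω1 : ∀ x y : ℕ → A, (∀ i < n, x i = y i) → ω x = ω y) :
    ∀ (N : ℕ) (x : ℕ → A), mStarIter q N n ω x =
      qfac q N * ∑ b ∈ Finset.Nat.antidiagonalTuple n N, q ^ (Ecoef n b) * ω (Φ n b x) := by
  intro N
  induction N with
  | zero =>
    intro x
    rw [Finset.Nat.antidiagonalTuple_zero_right]
    have hE : Ecoef n (0 : Fin n → ℕ) = 0 := by simp [Ecoef, pad]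
    have hΦ : Φ n (0 : Fin n → ℕ) x = x := by
      funext i
      have hp : pad n (0 : Fin n → ℕ) i = 0 := by simp [pad]
      have hS : SS n (0 : Fin n → ℕ) i = 0 := by simp [SS, pad]
      simp [Φ, st, hp, hS, blk]
    show ω x = _
    rw [Finset.sum_singleton, hE, hΦ]
    simp [qfac]
  | succ N ih =>
    intro x
    show mStar q (n + N) (mStarIter q N n ω) x = _
    rw [mStar_eq]
    simp_rw [ih]
    calc
      ∑ k ∈ Finset.range (n + N), q ^ k * (qfac q N *
          ∑ b ∈ Finset.Nat.antidiagonalTuple n N, q ^ Ecoef n b * ω (Φ n b (mu k x)))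
        = qfac q N * ∑ b ∈ Finset.Nat.antidiagonalTuple n N, q ^ Ecoef n b *
            ∑ k ∈ Finset.range (n + N), q ^ k * ω (Φ n b (mu k x)) := by
          simp_rw [Finset.mul_sum]
          rw [Finset.sum_comm]
          exact Finset.sum_congr rfl fun b _ => Finset.sum_congr rfl fun k _ => by ring
      _ = qfac q N * ∑ b ∈ Finset.Nat.antidiagonalTuple n N, q ^ Ecoef n b *
            ∑ j : Fin n, q ^ st n b j.val * geom q (b j + 1) * ω (Φ n (bump b j) x) := by
          refine congrArg _ (Finset.sum_congr rfl fun b hb => ?_)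
          rw [groupC q b (Finset.Nat.mem_antidiagonalTuple.mp hb) ω hω1 x]
      _ = qfac q N * ∑ p ∈ Finset.Nat.antidiagonalTuple n N ×ˢ (Finset.univ : Finset (Fin n)),
            q ^ Ecoef n p.1 * (q ^ st n p.1 p.2.val * geom q (p.1 p.2 + 1) *
              ω (Φ n (bump p.1 p.2) x)) := by
          rw [Finset.sum_product]
          exact congrArg _ (Finset.sum_congr rfl fun b _ => Finset.mul_sum _ _ _)
      _ = qfac q N * ∑ p ∈ (Finset.Nat.antidiagonalTuple n (N + 1) ×ˢ
              (Finset.univ : Finset (Fin n))).filter (fun p => p.1 p.2 ≠ 0),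
            q ^ Ecoef n p.1 * q ^ SS n p.1 p.2.val * geom q (p.1 p.2) * ω (Φ n p.1 x) := by
          congr 1
          refine Finset.sum_nbij' (fun p => (bump p.1 p.2, p.2)) (fun p => (drp p.1 p.2, p.2))
            ?_ ?_ ?_ ?_ ?_
          · rintro ⟨b, j⟩ hp
            rw [Finset.mem_product, Finset.Nat.mem_antidiagonalTuple] at hp
            rw [Finset.mem_filter, Finset.mem_product, Finset.Nat.mem_antidiagonalTuple]
            refine ⟨⟨?_, Finset.mem_univ _⟩, ?_⟩
            · rw [sum_bump, hp.1]
            · show bump b j j ≠ 0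
              simp [bump]
          · rintro ⟨b, j⟩ hp
            rw [Finset.mem_filter, Finset.mem_product, Finset.Nat.mem_antidiagonalTuple] at hp
            rw [Finset.mem_product, Finset.Nat.mem_antidiagonalTuple]
            refine ⟨?_, Finset.mem_univ _⟩
            have h1 : ∑ i, b i = N + 1 := hp.1.1
            have h2 := sum_drp b j hp.2
            show ∑ i, drp b j i = N
            omega
          · rintro ⟨b, j⟩ _
            simp only [Prod.mk.injEq]
            exact ⟨drp_bump b j, trivial⟩
          · rintro ⟨b, j⟩ hp
            rw [Finset.mem_filter] at hp
            simp only [Prod.mk.injEq]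
            exact ⟨bump_drp b j hp.2, trivial⟩
          · rintro ⟨b, j⟩ _
            show q ^ Ecoef n b * (q ^ st n b j.val * geom q (b j + 1) * ω (Φ n (bump b j) x))
              = q ^ Ecoef n (bump b j) * q ^ SS n (bump b j) j.val * geom q (bump b j j) *
                ω (Φ n (bump b j) x)
            have e1 : Ecoef n (bump b j) = Ecoef n b + j.val := Ecoef_bump b j
            have e2 : SS n (bump b j) j.val = SS n b j.val := by
              rw [SS_bump]; simp
            have e3 : bump b j j = b j + 1 := by simp [bump]
            have e4 : st n b j.val = j.val + SS n b j.val := rfl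
            rw [e1, e2, e3, e4, pow_add, pow_add]
            ring
      _ = qfac q N * ∑ p ∈ Finset.Nat.antidiagonalTuple n (N + 1) ×ˢ
              (Finset.univ : Finset (Fin n)),
            q ^ Ecoef n p.1 * q ^ SS n p.1 p.2.val * geom q (p.1 p.2) * ω (Φ n p.1 x) := by
          congr 1
          rw [Finset.sum_filter]
          refine Finset.sum_congr rfl fun p _ => ?_
          by_cases h : p.1 p.2 ≠ 0
          · rw [if_pos h]
          · rw [if_neg h]
            rw [not_not] at h
            rw [h]
            simp [geom]
      _ = qfac q N * geom q (N + 1) *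
            ∑ b ∈ Finset.Nat.antidiagonalTuple n (N + 1), q ^ Ecoef n b * ω (Φ n b x) := by
          rw [Finset.sum_product, Finset.mul_sum, Finset.mul_sum]
          refine Finset.sum_congr rfl fun b hb => ?_
          show qfac q N * ∑ j : Fin n,
              q ^ Ecoef n b * q ^ SS n b j.val * geom q (b j) * ω (Φ n b x)
            = qfac q N * geom q (N + 1) * (q ^ Ecoef n b * ω (Φ n b x))
          have hb' : ∑ i, b i = N + 1 := Finset.Nat.mem_antidiagonalTuple.mp hb
          have hinner : ∑ j : Fin n, q ^ SS n b j.val * geom q (b j) = geom q (N + 1) := by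
            calc ∑ j : Fin n, q ^ SS n b j.val * geom q (b j)
                = ∑ j : Fin n, q ^ (∑ t ∈ Finset.range j.val, pad n b t) * geom q (pad n b j.val) := by
                  refine Finset.sum_congr rfl fun j _ => ?_
                  rw [pad_val]
                  rfl
              _ = ∑ jv ∈ Finset.range n,
                    q ^ (∑ t ∈ Finset.range jv, pad n b t) * geom q (pad n b jv) :=
                  (Finset.sum_range (fun jv => q ^ (∑ t ∈ Finset.range jv, pad n b t) * geom q (pad n b jv))).symm
              _ = geom q (∑ t ∈ Finset.range n, pad n b t) := telescope q (pad n b) n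
              _ = geom q (N + 1) := by rw [sum_pad, hb']
          have hc : ∑ j : Fin n, q ^ Ecoef n b * q ^ SS n b j.val * geom q (b j) * ω (Φ n b x)
              = (q ^ Ecoef n b * ω (Φ n b x)) * ∑ j : Fin n, q ^ SS n b j.val * geom q (b j) := by
            rw [Finset.mul_sum]
            exact Finset.sum_congr rfl fun j _ => by ring
          rw [hc, hinner]
          ring
      _ = qfac q (N + 1) *
            ∑ b ∈ Finset.Nat.antidiagonalTuple n (N + 1), q ^ Ecoef n b * ω (Φ n b x) := by
          rw [show qfac q (N + 1) = qfac q N * geom q (N + 1) from rfl]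

lemma qfac_eq_zero {N : ℕ} (hN : 2 ≤ N) {q : ℂ} (hq : IsPrimitiveRoot q N) :
    qfac q N = 0 := by
  obtain ⟨M, rfl⟩ : ∃ M, N = M + 1 := ⟨N - 1, by omega⟩
  show qfac q M * geom q (M + 1) = 0
  have hq1 : q ≠ 1 := hq.ne_one (by omega)
  have hg : geom q (M + 1) = 0 := by
    unfold geom
    rw [geom_sum_eq hq1, hq.pow_eq_one, sub_self, zero_div]
  rw [hg, mul_zero]

end MStarAux

/-- if `q` is a primitive `N`-th root of unity (`N ≥ 2`), then
`(m*_q)^N = 0` on the multilinear forms over a unital associative ℂ-algebra. -/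
theorem mstar_pow_N_eq_zero
    (A : Type*) [Ring A] [Algebra ℂ A]
    (N : ℕ) (hN : 2 ≤ N) (q : ℂ) (hq : IsPrimitiveRoot q N)
    (n : ℕ) (ω : (ℕ → A) → ℂ) (hω : IsMForm n ω) :
    ∀ x, mStarIter q N n ω x = 0 := by
  intro x
  rw [MStarAux.iter_formula q n ω hω.1 N x, MStarAux.qfac_eq_zero hN hq, zero_mul]
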